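/- Let λ = −1/2 and κ ∈ ℝ, and let (u,b) be a smooth solution of the generalized system on [0,1]×[0,T) satisfying Dirichlet or periodic boundary conditions. Set E₀ := ∫₀¹(u₀'(x))² dx + ∫₀¹(b₀'(x))² dx and I(t) := (κ−1/2)·∫₀¹(∂ₓb(x,t))² dx − (1/2)·∫₀¹(∂ₓu(x,t))² dx. Then for all t ∈ [0,T): if κ ≥ 0 then −(1/2)E₀ ≤ I(t) ≤ (κ−1/2)E₀, while if κ < 0 then (κ−1/2)E₀ ≤ I(t) ≤ −(1/2)E₀. -/

import Mathlib

open Real Set Filter Topology MeasureTheory intervalIntegral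

noncomputable section

/-- Spatial derivative `∂ₓ f (x,t)`. -/
def pdx (f : ℝ → ℝ → ℝ) (x t : ℝ) : ℝ := deriv (fun y => f y t) x

/-- Second spatial derivative `∂ₓ² f (x,t)`. -/
def pdxx (f : ℝ → ℝ → ℝ) (x t : ℝ) : ℝ := iteratedDeriv 2 (fun y => f y t) x

/-- Time derivative `∂ₜ f (x,t)`. -/
def pdt (f : ℝ → ℝ → ℝ) (x t : ℝ) : ℝ := deriv (fun s => f x s) t

/-- Mixed derivative `∂ₜ∂ₓ f (x,t)`. -/
def pdtx (f : ℝ → ℝ → ℝ) (x t : ℝ) : ℝ := deriv (fun s => pdx f x s) t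

/-- The nonlocal term `I(t)`. -/
def Iterm (lam kappa : ℝ) (u b : ℝ → ℝ → ℝ) (t : ℝ) : ℝ :=
  (lam + kappa) * (∫ y in (0:ℝ)..1, (pdx b y t) ^ 2)
    - (lam + 1) * (∫ y in (0:ℝ)..1, (pdx u y t) ^ 2)

/-- `(u,b)` is a smooth solution of the generalized system on `[0,1] × [0,T)`
(the time `T` is an extended real, allowing `T = ∞`). -/
def GSys (lam kappa : ℝ) (T : EReal) (u b : ℝ → ℝ → ℝ) : Prop :=
  ContDiff ℝ (⊤ : ℕ∞) (fun p : ℝ × ℝ => u p.1 p.2) ∧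
  ContDiff ℝ (⊤ : ℕ∞) (fun p : ℝ × ℝ => b p.1 p.2) ∧
  ∀ x ∈ Icc (0:ℝ) 1, ∀ t : ℝ, 0 ≤ t → (t : EReal) < T →
    (pdtx u x t + u x t * pdxx u x t
      = lam * (pdx u x t) ^ 2 - lam * (pdx b x t) ^ 2 + kappa * b x t * pdxx b x t
        + Iterm lam kappa u b t) ∧
    (pdt b x t + u x t * pdx b x t = kappa * b x t * pdx u x t)

/-- Dirichlet boundary conditions on `[0,T)`. -/
def DirichletBC (T : EReal) (u b : ℝ → ℝ → ℝ) : Prop :=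
  ∀ t : ℝ, 0 ≤ t → (t : EReal) < T →
    u 0 t = 0 ∧ u 1 t = 0 ∧ b 0 t = 0 ∧ b 1 t = 0

/-- Periodic boundary conditions on `[0,T)`. -/
def PeriodicBC (T : EReal) (u b : ℝ → ℝ → ℝ) : Prop :=
  ∀ t : ℝ, 0 ≤ t → (t : EReal) < T →
    u 0 t = u 1 t ∧ pdx u 0 t = pdx u 1 t ∧ b 0 t = b 1 t ∧ pdx b 0 t = pdx b 1 t

/-- `γ` is a Lagrangian trajectory for `u` starting at `α₀`, on the time interval `[0,T)`. -/
def Traj (T : EReal) (u : ℝ → ℝ → ℝ) (α₀ : ℝ) (γ : ℝ → ℝ) : Prop :=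
  γ 0 = α₀ ∧ ∀ t : ℝ, 0 ≤ t → (t : EReal) < T →
    γ t ∈ Icc (0:ℝ) 1 ∧ HasDerivAt γ (u (γ t) t) t

/-- The Jacobian `γ_α(α₀,t) = exp (∫₀ᵗ ∂ₓu(γ(α₀,s),s) ds)` along a trajectory `γ`. -/
def Jac (u : ℝ → ℝ → ℝ) (γ : ℝ → ℝ) (t : ℝ) : ℝ :=
  Real.exp (∫ s in (0:ℝ)..t, pdx u (γ s) s)

/-- `f` has a zero of order `m` at `x₀`. -/
def ZeroOfOrder (f : ℝ → ℝ) (m : ℕ) (x₀ : ℝ) : Prop :=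
  (∀ n < m, iteratedDeriv n f x₀ = 0) ∧ iteratedDeriv m f x₀ ≠ 0


open scoped ContDiff

namespace Statement3Helpers

/-- First partial derivative of a two-variable function, as a function on the product. -/
def Dx (V : ℝ × ℝ → ℝ) : ℝ × ℝ → ℝ := fun p => fderiv ℝ V p (1, 0)

/-- Second partial derivative of a two-variable function, as a function on the product. -/
def Dt (V : ℝ × ℝ → ℝ) : ℝ × ℝ → ℝ := fun p => fderiv ℝ V p (0, 1)

lemma contDiff_Dx {V : ℝ × ℝ → ℝ} (hV : ContDiff ℝ ∞ V) : ContDiff ℝ ∞ (Dx V) :=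
  (hV.fderiv_right (by norm_num)).clm_apply contDiff_const

lemma contDiff_Dt {V : ℝ × ℝ → ℝ} (hV : ContDiff ℝ ∞ V) : ContDiff ℝ ∞ (Dt V) :=
  (hV.fderiv_right (by norm_num)).clm_apply contDiff_const

lemma hasDerivAt_Dx {V : ℝ × ℝ → ℝ} (hV : ContDiff ℝ ∞ V) (x t : ℝ) :
    HasDerivAt (fun y => V (y, t)) (Dx V (x, t)) x :=
  ((hV.differentiable (by norm_num) (x, t)).hasFDerivAt).comp_hasDerivAt x
    ((hasDerivAt_id x).prodMk (hasDerivAt_const x t))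

lemma hasDerivAt_Dt {V : ℝ × ℝ → ℝ} (hV : ContDiff ℝ ∞ V) (x t : ℝ) :
    HasDerivAt (fun s => V (x, s)) (Dt V (x, t)) t :=
  ((hV.differentiable (by norm_num) (x, t)).hasFDerivAt).comp_hasDerivAt t
    ((hasDerivAt_const t x).prodMk (hasDerivAt_id t))

lemma clairaut {V : ℝ × ℝ → ℝ} (hV : ContDiff ℝ ∞ V) (x t : ℝ) :
    Dx (Dt V) (x, t) = Dt (Dx V) (x, t) := by
  have hf : ∀ y, HasFDerivAt V (fderiv ℝ V y) y := fun y =>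
    (hV.differentiable (by norm_num) y).hasFDerivAt
  have hx : HasFDerivAt (fderiv ℝ V) (fderiv ℝ (fderiv ℝ V) (x, t)) (x, t) :=
    ((hV.fderiv_right (m := ∞) (by norm_num)).differentiable (by norm_num) (x, t)).hasFDerivAt
  have symm := second_derivative_symmetric hf hx ((0:ℝ), (1:ℝ)) ((1:ℝ), (0:ℝ))
  have h1 : HasDerivAt (fun s => fderiv ℝ V (x, s)) (fderiv ℝ (fderiv ℝ V) (x, t) (0, 1)) t :=
    hx.comp_hasDerivAt t ((hasDerivAt_const t x).prodMk (hasDerivAt_id t))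
  have h2 : HasDerivAt (fun s => Dx V (x, s))
      (fderiv ℝ (fderiv ℝ V) (x, t) (0, 1) (1, 0)) t :=
    (ContinuousLinearMap.apply ℝ ℝ ((1:ℝ), (0:ℝ))).hasFDerivAt.comp_hasDerivAt t h1
  have h3 : HasDerivAt (fun s => Dx V (x, s)) (Dt (Dx V) (x, t)) t :=
    hasDerivAt_Dt (contDiff_Dx hV) x t
  have h4 : HasDerivAt (fun y => Dt V (y, t)) (Dx (Dt V) (x, t)) x :=
    hasDerivAt_Dx (contDiff_Dt hV) x t
  have h5 : HasDerivAt (fun y => fderiv ℝ V (y, t)) (fderiv ℝ (fderiv ℝ V) (x, t) (1, 0)) x :=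
    hx.comp_hasDerivAt x ((hasDerivAt_id x).prodMk (hasDerivAt_const x t))
  have h6 : HasDerivAt (fun y => Dt V (y, t))
      (fderiv ℝ (fderiv ℝ V) (x, t) (1, 0) (0, 1)) x :=
    (ContinuousLinearMap.apply ℝ ℝ ((0:ℝ), (1:ℝ))).hasFDerivAt.comp_hasDerivAt x h5
  rw [h4.unique h6, h3.unique h2]
  exact symm.symm

lemma cont_slice {W : ℝ × ℝ → ℝ} (hW : Continuous W) (t : ℝ) :
    Continuous (fun x : ℝ => W (x, t)) :=
  hW.comp (continuous_id.prodMk continuous_const)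

lemma hasDerivAt_int {G : ℝ × ℝ → ℝ} (hG : ContDiff ℝ ∞ G) (t₀ : ℝ) :
    HasDerivAt (fun s => ∫ x in (0:ℝ)..1, G (x, s))
      (∫ x in (0:ℝ)..1, Dt G (x, t₀)) t₀ := by
  have hDt := contDiff_Dt hG
  have hK : IsCompact ((Icc (0:ℝ) 1) ×ˢ (Icc (t₀ - 1) (t₀ + 1))) :=
    isCompact_Icc.prod isCompact_Icc
  obtain ⟨M, hM⟩ := hK.exists_bound_of_continuousOn hDt.continuous.continuousOn
  refine (intervalIntegral.hasDerivAt_integral_of_dominated_loc_of_deriv_le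
    (F := fun s x => G (x, s)) (F' := fun s x => Dt G (x, s)) (bound := fun _ => M)
    (Metric.ball_mem_nhds t₀ one_pos) ?_ ?_ ?_ ?_ ?_ ?_).2
  · exact Eventually.of_forall fun s => (cont_slice hG.continuous s).aestronglyMeasurable
  · exact (cont_slice hG.continuous t₀).intervalIntegrable 0 1
  · exact (cont_slice hDt.continuous t₀).aestronglyMeasurable
  · refine Eventually.of_forall fun x hx s hs => hM (x, s) ?_
    constructor
    · exact Ioc_subset_Icc_self (by rwa [uIoc_of_le zero_le_one] at hx)
    · have : |s - t₀| < 1 := by simpa [Real.dist_eq] using hs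
      constructor <;> [linarith [(abs_lt.1 this).1]; linarith [(abs_lt.1 this).2]]
  · exact intervalIntegrable_const
  · exact Eventually.of_forall fun x _ s _ => hasDerivAt_Dt hG x s

end Statement3Helpers

open Statement3Helpers

/-- for `λ = −1/2`, bounds on the nonlocal term
`I(t) = (κ−1/2)‖bₓ‖₂² − (1/2)‖uₓ‖₂²` in terms of the initial energy `E₀`. -/
theorem statement3 (kappa : ℝ) (T : EReal) (hT : 0 < T)
    (u b : ℝ → ℝ → ℝ)
    (hsys : GSys (-(1/2)) kappa T u b)
    (hbc : DirichletBC T u b ∨ PeriodicBC T u b) :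
    ∀ t : ℝ, 0 ≤ t → (t : EReal) < T →
      (0 ≤ kappa →
        -(1/2) * ((∫ x in (0:ℝ)..1, (pdx u x 0) ^ 2) + (∫ x in (0:ℝ)..1, (pdx b x 0) ^ 2))
          ≤ (kappa - 1/2) * (∫ x in (0:ℝ)..1, (pdx b x t) ^ 2)
              - (1/2) * (∫ x in (0:ℝ)..1, (pdx u x t) ^ 2) ∧
        (kappa - 1/2) * (∫ x in (0:ℝ)..1, (pdx b x t) ^ 2)
              - (1/2) * (∫ x in (0:ℝ)..1, (pdx u x t) ^ 2)
          ≤ (kappa - 1/2) * ((∫ x in (0:ℝ)..1, (pdx u x 0) ^ 2)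
              + (∫ x in (0:ℝ)..1, (pdx b x 0) ^ 2))) ∧
      (kappa < 0 →
        (kappa - 1/2) * ((∫ x in (0:ℝ)..1, (pdx u x 0) ^ 2)
              + (∫ x in (0:ℝ)..1, (pdx b x 0) ^ 2))
          ≤ (kappa - 1/2) * (∫ x in (0:ℝ)..1, (pdx b x t) ^ 2)
              - (1/2) * (∫ x in (0:ℝ)..1, (pdx u x t) ^ 2) ∧
        (kappa - 1/2) * (∫ x in (0:ℝ)..1, (pdx b x t) ^ 2)
              - (1/2) * (∫ x in (0:ℝ)..1, (pdx u x t) ^ 2)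
          ≤ -(1/2) * ((∫ x in (0:ℝ)..1, (pdx u x 0) ^ 2)
              + (∫ x in (0:ℝ)..1, (pdx b x 0) ^ 2))) := by
  obtain ⟨hu, hb, hpde⟩ := hsys
  set VU : ℝ × ℝ → ℝ := fun p => u p.1 p.2 with hVUdef
  set VB : ℝ × ℝ → ℝ := fun p => b p.1 p.2 with hVBdef
  have hU : ContDiff ℝ ∞ VU := hu.of_le (by simp)
  have hBc : ContDiff ℝ ∞ VB := hb.of_le (by simp)
  have hUx : ContDiff ℝ ∞ (Dx VU) := contDiff_Dx hU
  have hBx : ContDiff ℝ ∞ (Dx VB) := contDiff_Dx hBc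
  have hBt : ContDiff ℝ ∞ (Dt VB) := contDiff_Dt hBc
  -- translation between `pdx/pdt/pdxx/pdtx` and `Dx/Dt`
  have hpdxu : ∀ x s : ℝ, pdx u x s = Dx VU (x, s) := fun x s => (hasDerivAt_Dx hU x s).deriv
  have hpdxb : ∀ x s : ℝ, pdx b x s = Dx VB (x, s) := fun x s => (hasDerivAt_Dx hBc x s).deriv
  have hpdtb : ∀ x s : ℝ, pdt b x s = Dt VB (x, s) := fun x s => (hasDerivAt_Dt hBc x s).deriv
  have hpdtxu : ∀ x s : ℝ, pdtx u x s = Dt (Dx VU) (x, s) := by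
    intro x s
    have hfun : (fun r => pdx u x r) = fun r => Dx VU (x, r) := funext fun r => hpdxu x r
    show deriv (fun r => pdx u x r) s = _
    rw [hfun]
    exact (hasDerivAt_Dt hUx x s).deriv
  have hit2 : ∀ f : ℝ → ℝ, iteratedDeriv 2 f = deriv (deriv f) := by
    intro f
    rw [show (2:ℕ) = 1 + 1 from rfl, iteratedDeriv_succ, iteratedDeriv_one]
  have hpdxxu : ∀ x s : ℝ, pdxx u x s = Dx (Dx VU) (x, s) := by
    intro x s
    show iteratedDeriv 2 (fun y => u y s) x = _
    rw [hit2]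
    have hfun : deriv (fun y => u y s) = fun y => Dx VU (y, s) := funext fun y => hpdxu y s
    rw [hfun]
    exact (hasDerivAt_Dx hUx x s).deriv
  have hpdxxb : ∀ x s : ℝ, pdxx b x s = Dx (Dx VB) (x, s) := by
    intro x s
    show iteratedDeriv 2 (fun y => b y s) x = _
    rw [hit2]
    have hfun : deriv (fun y => b y s) = fun y => Dx VB (y, s) := funext fun y => hpdxb y s
    rw [hfun]
    exact (hasDerivAt_Dx hBx x s).deriv
  -- the energy density
  set G : ℝ × ℝ → ℝ := fun p => (Dx VU p) ^ 2 + (Dx VB p) ^ 2 with hGdef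
  have hG : ContDiff ℝ ∞ G := (hUx.pow 2).add (hBx.pow 2)
  have hDtG : ∀ x s : ℝ, Dt G (x, s)
      = 2 * Dx VU (x, s) * Dt (Dx VU) (x, s) + 2 * Dx VB (x, s) * Dt (Dx VB) (x, s) := by
    intro x s
    have h1 : HasDerivAt (fun r => G (x, r)) (Dt G (x, s)) s := hasDerivAt_Dt hG x s
    have h2 := ((hasDerivAt_Dt hUx x s).pow 2).add ((hasDerivAt_Dt hBx x s).pow 2)
    have h3 := h1.unique h2
    rw [h3]
    push_cast
    ring
  have hED : ∀ s : ℝ, HasDerivAt (fun r => ∫ x in (0:ℝ)..1, G (x, r))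
      (∫ x in (0:ℝ)..1, Dt G (x, s)) s := fun s => hasDerivAt_int hG s
  -- derivative of the energy vanishes
  have hzero : ∀ s : ℝ, 0 ≤ s → (s : EReal) < T → (∫ x in (0:ℝ)..1, Dt G (x, s)) = 0 := by
    intro s hs hsT
    have hPDE1 : ∀ x ∈ Icc (0:ℝ) 1,
        Dt (Dx VU) (x, s) + u x s * Dx (Dx VU) (x, s)
          = -(1/2) * (Dx VU (x, s)) ^ 2 - -(1/2) * (Dx VB (x, s)) ^ 2
            + kappa * b x s * Dx (Dx VB) (x, s) + Iterm (-(1/2)) kappa u b s := by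
      intro x hx
      have h := (hpde x hx s hs hsT).1
      rwa [hpdtxu, hpdxxu, hpdxxb, hpdxu, hpdxb] at h
    have hPDE2 : ∀ x ∈ Icc (0:ℝ) 1,
        Dt VB (x, s) = kappa * b x s * Dx VU (x, s) - u x s * Dx VB (x, s) := by
      intro x hx
      have h := (hpde x hx s hs hsT).2
      rw [hpdtb, hpdxb, hpdxu] at h
      linarith
    set Ψ : ℝ → ℝ := fun y =>
      ((-(u y s) * (Dx VU (y, s)) ^ 2 + u y s * (Dx VB (y, s)) ^ 2)
        + 2 * Iterm (-(1/2)) kappa u b s * u y s)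
        + 2 * (Dx VB (y, s) * Dt VB (y, s)) with hΨ
    have key : ∀ x ∈ uIcc (0:ℝ) 1, HasDerivAt Ψ (Dt G (x, s)) x := by
      intro x hx
      rw [uIcc_of_le zero_le_one] at hx
      have hud : HasDerivAt (fun y => u y s) (Dx VU (x, s)) x := hasDerivAt_Dx hU x s
      have huxd : HasDerivAt (fun y => Dx VU (y, s)) (Dx (Dx VU) (x, s)) x :=
        hasDerivAt_Dx hUx x s
      have hbxd : HasDerivAt (fun y => Dx VB (y, s)) (Dx (Dx VB) (x, s)) x :=
        hasDerivAt_Dx hBx x s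
      have hbtd : HasDerivAt (fun y => Dt VB (y, s)) (Dx (Dt VB) (x, s)) x :=
        hasDerivAt_Dx hBt x s
      have H := (((hud.neg.mul (huxd.pow 2)).add (hud.mul (hbxd.pow 2))).add
          ((hud).const_mul (2 * Iterm (-(1/2)) kappa u b s))).add
          ((hbxd.mul hbtd).const_mul 2)
      have H' : HasDerivAt Ψ
          (((-(Dx VU (x, s)) * (Dx VU (x, s)) ^ 2
              + -(u x s) * (((2:ℕ):ℝ) * (Dx VU (x, s)) ^ (2 - 1) * Dx (Dx VU) (x, s)))
            + (Dx VU (x, s) * (Dx VB (x, s)) ^ 2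
              + u x s * (((2:ℕ):ℝ) * (Dx VB (x, s)) ^ (2 - 1) * Dx (Dx VB) (x, s)))
            + 2 * Iterm (-(1/2)) kappa u b s * Dx VU (x, s))
            + 2 * (Dx (Dx VB) (x, s) * Dt VB (x, s) + Dx VB (x, s) * Dx (Dt VB) (x, s))) x := H
      have hv : (((-(Dx VU (x, s)) * (Dx VU (x, s)) ^ 2
              + -(u x s) * (((2:ℕ):ℝ) * (Dx VU (x, s)) ^ (2 - 1) * Dx (Dx VU) (x, s)))
            + (Dx VU (x, s) * (Dx VB (x, s)) ^ 2
              + u x s * (((2:ℕ):ℝ) * (Dx VB (x, s)) ^ (2 - 1) * Dx (Dx VB) (x, s)))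
            + 2 * Iterm (-(1/2)) kappa u b s * Dx VU (x, s))
            + 2 * (Dx (Dx VB) (x, s) * Dt VB (x, s) + Dx VB (x, s) * Dx (Dt VB) (x, s)))
          = Dt G (x, s) := by
        rw [hDtG x s, hPDE2 x hx, clairaut hBc x s]
        push_cast
        linear_combination (-(2 * Dx VU (x, s))) * hPDE1 x hx
      exact hv ▸ H'
    have hcont : Continuous fun x => Dt G (x, s) := cont_slice (contDiff_Dt hG).continuous s
    rw [intervalIntegral.integral_eq_sub_of_hasDerivAt key (hcont.intervalIntegrable 0 1)]
    have h0m : (0:ℝ) ∈ Icc (0:ℝ) 1 := left_mem_Icc.2 zero_le_one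
    have h1m : (1:ℝ) ∈ Icc (0:ℝ) 1 := right_mem_Icc.2 zero_le_one
    have hbt0 := hPDE2 0 h0m
    have hbt1 := hPDE2 1 h1m
    rcases hbc with hd | hp
    · obtain ⟨hu0, hu1, hb0, hb1⟩ := hd s hs hsT
      simp only [hΨ]
      rw [hbt0, hbt1, hu0, hu1, hb0, hb1]
      ring
    · obtain ⟨hu01, hux01, hb01, hbx01⟩ := hp s hs hsT
      rw [hpdxu 0 s, hpdxu 1 s] at hux01
      rw [hpdxb 0 s, hpdxb 1 s] at hbx01
      simp only [hΨ]
      rw [hbt0, hbt1, hu01, hux01, hb01, hbx01]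
      ring
  intro t ht htT
  -- conservation of energy
  have hconst : (∫ x in (0:ℝ)..1, G (x, t)) = ∫ x in (0:ℝ)..1, G (x, 0) := by
    have hcont : ContinuousOn (fun r => ∫ x in (0:ℝ)..1, G (x, r)) (Icc 0 t) :=
      fun r _ => ((hED r).continuousAt).continuousWithinAt
    have hder : ∀ r ∈ Ico (0:ℝ) t,
        HasDerivWithinAt (fun r => ∫ x in (0:ℝ)..1, G (x, r)) 0 (Ici r) r := by
      intro r hr
      have hrT : (r : EReal) < T := lt_trans (by exact_mod_cast hr.2) htT
      have h := hED r
      rw [hzero r hr.1 hrT] at h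
      exact h.hasDerivWithinAt
    exact constant_of_has_deriv_right_zero hcont hder t (right_mem_Icc.2 ht)
  have hsplit : ∀ s : ℝ, (∫ x in (0:ℝ)..1, G (x, s))
      = (∫ x in (0:ℝ)..1, (pdx u x s) ^ 2) + (∫ x in (0:ℝ)..1, (pdx b x s) ^ 2) := by
    intro s
    have hcu : Continuous fun x : ℝ => (Dx VU (x, s)) ^ 2 := (cont_slice hUx.continuous s).pow 2
    have hcb : Continuous fun x : ℝ => (Dx VB (x, s)) ^ 2 := (cont_slice hBx.continuous s).pow 2
    rw [show (∫ x in (0:ℝ)..1, (pdx u x s) ^ 2) = ∫ x in (0:ℝ)..1, (Dx VU (x, s)) ^ 2 from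
        intervalIntegral.integral_congr fun x _ => by simp only [hpdxu],
      show (∫ x in (0:ℝ)..1, (pdx b x s) ^ 2) = ∫ x in (0:ℝ)..1, (Dx VB (x, s)) ^ 2 from
        intervalIntegral.integral_congr fun x _ => by simp only [hpdxb],
      ← intervalIntegral.integral_add (hcu.intervalIntegrable 0 1) (hcb.intervalIntegrable 0 1)]
  have hkey : (∫ x in (0:ℝ)..1, (pdx u x t) ^ 2) + (∫ x in (0:ℝ)..1, (pdx b x t) ^ 2)
      = (∫ x in (0:ℝ)..1, (pdx u x 0) ^ 2) + (∫ x in (0:ℝ)..1, (pdx b x 0) ^ 2) := by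
    rw [← hsplit, ← hsplit, hconst]
  have hA : 0 ≤ ∫ x in (0:ℝ)..1, (pdx u x t) ^ 2 :=
    intervalIntegral.integral_nonneg zero_le_one fun x _ => sq_nonneg _
  have hB : 0 ≤ ∫ x in (0:ℝ)..1, (pdx b x t) ^ 2 :=
    intervalIntegral.integral_nonneg zero_le_one fun x _ => sq_nonneg _
  constructor
  · intro hk
    constructor
    · nlinarith [mul_nonneg hk hB]
    · nlinarith [mul_nonneg hk hA]
  · intro hk
    have hk' : 0 ≤ -kappa := by linarith
    constructor
    · nlinarith [mul_nonneg hk' hA]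
    · nlinarith [mul_nonneg hk' hB]
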